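/- (Stability of subsolutions via relaxed upper limits.) For each n ≥ 1 and each i ∈ 𝓘 let v^{i,n} : ℝ^k → ℝ be continuous, with v^{i,n} ≤ v^{i,n+1} pointwise, with a uniform polynomial growth bound |v^{i,n}(x)| ≤ C(1 + |x|^γ) independent of n, and satisfying pointwise v^{i,n}(x) ≥ max_{j≠i}( v^{j,n−1}(x) − g_ij(x) ). Assume that for each n ≥ 1 the m-tuple (v^{1,n},…,v^{m,n}) is a viscosity subsolution of the decoupled system (S_n): for each i, min{ v^{i,n}(x) − max_{j≠i}( v^{j,n−1}(x) − g_ij(x) ), r v^{i,n}(x) − ⟨b(x), D_x v^{i,n}(x)⟩ − ½Tr[(σσᵀ)(x) D²_x v^{i,n}(x)] − f_i(x, v^{1,n−1}(x),…,v^{i−1,n−1}(x), v^{i,n}(x), v^{i+1,n−1}(x),…,v^{m,n−1}(x), σ(x)ᵀ D_x v^{i,n}(x)) } = 0. Define the relaxed upper limit v^{i,*}(x) = limsup_{n→∞, x′→x} v^{i,n}(x′). Then (v^{1,*},…,v^{m,*}) is a viscosity subsolution of the system (S). -/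

import Mathlib

open Filter Matrix

noncomputable section

abbrev Vec (n : ℕ) := Fin n → ℝ

/-- Euclidean norm on `Fin n → ℝ`. -/
def eucNorm {n : ℕ} (v : Vec n) : ℝ := Real.sqrt (∑ i, v i ^ 2)

/-- Euclidean inner product. -/
def dotp {n : ℕ} (u v : Vec n) : ℝ := ∑ i, u i * v i

/-- Quadratic form `⟨X v, v⟩`. -/
def quadForm {n : ℕ} (X : Matrix (Fin n) (Fin n) ℝ) (v : Vec n) : ℝ :=
  ∑ i, ∑ j, X i j * v i * v j

/-- Squared Frobenius norm. -/
def frobSq {n p : ℕ} (A : Matrix (Fin n) (Fin p) ℝ) : ℝ := ∑ i, ∑ j, A i j ^ 2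

/-- `(q, X)` belongs to the second-order subjet `J^{2,-} φ (x)`. -/
def InSubjet {n : ℕ} (φ : Vec n → ℝ) (x q : Vec n) (X : Matrix (Fin n) (Fin n) ℝ) : Prop :=
  X.IsSymm ∧ ∀ ε > (0:ℝ), ∀ᶠ y in nhds x,
    φ x + dotp q (y - x) + (1/2) * quadForm X (y - x) - ε * eucNorm (y - x) ^ 2 ≤ φ y

/-- `(q, X)` belongs to the second-order superjet `J^{2,+} φ (x)`. -/
def InSuperjet {n : ℕ} (φ : Vec n → ℝ) (x q : Vec n) (X : Matrix (Fin n) (Fin n) ℝ) : Prop :=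
  X.IsSymm ∧ ∀ ε > (0:ℝ), ∀ᶠ y in nhds x,
    φ y ≤ φ x + dotp q (y - x) + (1/2) * quadForm X (y - x) + ε * eucNorm (y - x) ^ 2

/-- Polynomial growth. -/
def PolyGrowth {n : ℕ} (φ : Vec n → ℝ) : Prop :=
  ∃ (C : ℝ) (γ : ℕ), ∀ x, |φ x| ≤ C * (1 + eucNorm x ^ γ)

/-- The switching obstacle `max_{j ≠ i} (v^j(x) - g_{ij}(x))`. -/
def obstacle {k m : ℕ} (g : Fin m → Fin m → Vec k → ℝ) (v : Fin m → Vec k → ℝ)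
    (i : Fin m) (x : Vec k) : ℝ :=
  ⨆ j : {j : Fin m // j ≠ i}, (v j x - g i j x)

/-- The second order term of the system, evaluated on a jet `(q, X)`. -/
def ham {k d m : ℕ} (r : ℝ) (b : Vec k → Vec k) (σ : Vec k → Matrix (Fin k) (Fin d) ℝ)
    (f : Fin m → Vec k → (Fin m → ℝ) → Vec d → ℝ) (v : Fin m → Vec k → ℝ)
    (i : Fin m) (x q : Vec k) (X : Matrix (Fin k) (Fin k) ℝ) : ℝ :=
  r * v i x - dotp (b x) q - (1/2) * Matrix.trace (σ x * (σ x)ᵀ * X)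
    - f i x (fun j => v j x) ((σ x)ᵀ.mulVec q)

def IsSupersolution {k d m : ℕ} (r : ℝ) (b : Vec k → Vec k)
    (σ : Vec k → Matrix (Fin k) (Fin d) ℝ)
    (f : Fin m → Vec k → (Fin m → ℝ) → Vec d → ℝ)
    (g : Fin m → Fin m → Vec k → ℝ) (v : Fin m → Vec k → ℝ) : Prop :=
  ∀ (i : Fin m) (x q : Vec k) (X : Matrix (Fin k) (Fin k) ℝ), InSubjet (v i) x q X →
    0 ≤ min (v i x - obstacle g v i x) (ham r b σ f v i x q X)

def IsSubsolution {k d m : ℕ} (r : ℝ) (b : Vec k → Vec k)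
    (σ : Vec k → Matrix (Fin k) (Fin d) ℝ)
    (f : Fin m → Vec k → (Fin m → ℝ) → Vec d → ℝ)
    (g : Fin m → Fin m → Vec k → ℝ) (v : Fin m → Vec k → ℝ) : Prop :=
  ∀ (i : Fin m) (x q : Vec k) (X : Matrix (Fin k) (Fin k) ℝ), InSuperjet (v i) x q X →
    min (v i x - obstacle g v i x) (ham r b σ f v i x q X) ≤ 0

/-- Gradient with respect to the standard basis. -/
def grad {k : ℕ} (φ : Vec k → ℝ) (x : Vec k) : Vec k :=
  fun i => fderiv ℝ φ x (Pi.single i 1)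

/-- Hessian matrix with respect to the standard basis. -/
def hess {k : ℕ} (φ : Vec k → ℝ) (x : Vec k) : Matrix (Fin k) (Fin k) ℝ :=
  fun i j => fderiv ℝ (fun y => fderiv ℝ φ y (Pi.single j 1)) x (Pi.single i 1)

/-- The infinitesimal generator `𝓛φ = ½ Tr[σσᵀ D²φ] + b · Dφ`. -/
def genL {k d : ℕ} (b : Vec k → Vec k) (σ : Vec k → Matrix (Fin k) (Fin d) ℝ)
    (φ : Vec k → ℝ) (x : Vec k) : ℝ :=
  (1/2) * Matrix.trace (σ x * (σ x)ᵀ * hess φ x) + dotp (b x) (grad φ x)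

/-- The structural assumptions on the data `b, σ, f, g` that do not involve second
derivatives of the switching costs: Lipschitz continuity and linear growth of the
coefficients, continuity, uniform Lipschitz continuity in `(y,z)` with constant `C`,
polynomial growth and monotonicity of the generators, and nonnegativity, continuity
and polynomial growth of the switching costs. -/
def CoreAssumptions {k d m : ℕ} (b : Vec k → Vec k)
    (σ : Vec k → Matrix (Fin k) (Fin d) ℝ)
    (f : Fin m → Vec k → (Fin m → ℝ) → Vec d → ℝ)
    (g : Fin m → Fin m → Vec k → ℝ) (C : ℝ) : Prop :=
  (∃ Cb : ℝ, ∀ x y : Vec k, eucNorm (b x - b y) ≤ Cb * eucNorm (x - y) ∧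
      Real.sqrt (frobSq (σ x - σ y)) ≤ Cb * eucNorm (x - y)) ∧
  (∃ Cb : ℝ, ∀ x : Vec k, eucNorm (b x) ≤ Cb * (1 + eucNorm x) ∧
      Real.sqrt (frobSq (σ x)) ≤ Cb * (1 + eucNorm x)) ∧
  (∀ i, Continuous fun p : Vec k × (Fin m → ℝ) × Vec d => f i p.1 p.2.1 p.2.2) ∧
  (∀ i (x : Vec k) (y y' : Fin m → ℝ) (z z' : Vec d),
      |f i x y z - f i x y' z'| ≤ C * (eucNorm (y - y') + eucNorm (z - z'))) ∧
  (∀ i, PolyGrowth fun x => f i x 0 0) ∧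
  (∀ i j, j ≠ i → ∀ (x : Vec k) (z : Vec d) (y : Fin m → ℝ) (t t' : ℝ), t ≤ t' →
      f i x (Function.update y j t) z ≤ f i x (Function.update y j t') z) ∧
  (∀ i j x, 0 ≤ g i j x) ∧
  (∀ i x, g i i x = 0) ∧
  (∀ i j, Continuous (g i j)) ∧
  (∀ i j, PolyGrowth (g i j))

/-- The non-free-loop condition on the switching costs. -/
def NonFreeLoop {k m : ℕ} (g : Fin m → Fin m → Vec k → ℝ) : Prop :=
  ∀ (N : ℕ) (ι : ℕ → Fin m), 2 ≤ N → ι 0 ≠ ι 1 → ι 0 = ι (N - 1) →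
    (Finset.image ι (Finset.range N)).card = N - 1 →
    ∀ x : Vec k, 0 < ∑ l ∈ Finset.range (N - 1), g (ι l) (ι (l + 1)) x

/-- The full standing assumptions: the core assumptions, smoothness of the switching
costs with `𝓛 g_{ij} ≤ 0`, and the non-free-loop condition. -/
def DataAssumptions {k d m : ℕ} (b : Vec k → Vec k)
    (σ : Vec k → Matrix (Fin k) (Fin d) ℝ)
    (f : Fin m → Vec k → (Fin m → ℝ) → Vec d → ℝ)
    (g : Fin m → Fin m → Vec k → ℝ) (C : ℝ) : Prop :=
  CoreAssumptions b σ f g C ∧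
  (∀ i j, ContDiff ℝ 2 (g i j)) ∧
  (∀ i j x, genL b σ (g i j) x ≤ 0) ∧
  NonFreeLoop g

/-!
Let `W^i` be the relaxed upper limit and `(q, X)` a superjet of `W^i` at `x`. Enlarging `X` by
`4ε I` gives a quadratic `ψ` with `W^i - ψ ≤ -ε|· - x|²` near `x`, a strict maximum at `x`.
Maximizers `y_n` of `v^{i,n} - ψ` over a small closed ball have nondecreasing maxima (the
sequence increases in `n`), and a subsequence converges to a maximizer of `W^i - ψ`, hence to
`x`, with `v^{i,n}(y_n) → W^i(x)`. At `y_n` the test function `ψ` yields a superjet of `v^{i,n}`,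
so the inequality of `(S_n)` holds there; it passes to the limit by continuity, the frozen values
`v^{j,n-1}(y_n)` converging to some `β_j ≤ W^j(x)`. The operator is antitone in these values
(`f_i` is nondecreasing in `y^j`, `j ≠ i`), so `β` may be replaced by `(W^j(x))_j`, at the
price of `2ε Tr(σσᵀ)` for the enlarged `X`; let `ε → 0`.
-/

open Topology

lemma monotone_of_monotone_update {ι α β : Type*} [Fintype ι] [DecidableEq ι] [Preorder α]
    [Preorder β] {F : (ι → α) → β} (hF : ∀ j w, Monotone fun t => F (Function.update w j t)) :
    Monotone F := by
  intro u w huw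
  have key : ∀ s : Finset ι, F u ≤ F (s.piecewise w u) := by
    intro s
    induction s using Finset.induction_on with
    | empty => simp
    | insert j s hj ih =>
      rw [Finset.piecewise_insert]
      calc F u ≤ F (s.piecewise w u) := ih
        _ = F (Function.update (s.piecewise w u) j (u j)) := by
          rw [← Finset.piecewise_eq_of_notMem s w u hj, Function.update_eq_self]
        _ ≤ F (Function.update (s.piecewise w u) j (w j)) := hF j _ (huw j)
  simpa using key Finset.univ

lemma continuous_ciSup_of_finite {X ι : Type*} [TopologicalSpace X] [Finite ι]
    {F : ι → X → ℝ} (hF : ∀ i, Continuous (F i)) : Continuous fun x => ⨆ i, F i x := by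
  rcases isEmpty_or_nonempty ι with hι | hι
  · simpa only [Real.iSup_of_isEmpty] using continuous_const
  · have := Fintype.ofFinite ι
    simpa only [← Finset.sup'_univ_eq_ciSup] using
      Continuous.finset_sup'_apply Finset.univ_nonempty fun i _ => hF i

section Euclidean

variable {n : ℕ}

lemma eucNorm_sq (v : Vec n) : eucNorm v ^ 2 = ∑ i, v i ^ 2 :=
  Real.sq_sqrt (by positivity)

@[fun_prop]
lemma continuous_eucNorm : Continuous (eucNorm : Vec n → ℝ) := by
  unfold eucNorm; fun_prop

lemma eucNorm_zero : eucNorm (0 : Vec n) = 0 := by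
  simp [eucNorm]

lemma eucNorm_pos {v : Vec n} (hv : v ≠ 0) : 0 < eucNorm v := by
  obtain ⟨i, hi⟩ := Function.ne_iff.mp hv
  exact Real.sqrt_pos.mpr <| Finset.sum_pos' (fun j _ => sq_nonneg (v j))
    ⟨i, Finset.mem_univ i, sq_pos_of_ne_zero hi⟩

lemma abs_apply_le_eucNorm (v : Vec n) (i : Fin n) : |v i| ≤ eucNorm v := by
  rw [eucNorm, ← Real.sqrt_sq_eq_abs]
  exact Real.sqrt_le_sqrt
    (Finset.single_le_sum (f := fun j => v j ^ 2) (fun j _ => sq_nonneg _) (Finset.mem_univ i))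

lemma abs_apply_le_sqrt_frobSq {p : ℕ} (A : Matrix (Fin n) (Fin p) ℝ) (i : Fin n) (j : Fin p) :
    |A i j| ≤ Real.sqrt (frobSq A) := by
  rw [← Real.sqrt_sq_eq_abs]
  refine Real.sqrt_le_sqrt ?_
  calc A i j ^ 2 ≤ ∑ j', A i j' ^ 2 :=
        Finset.single_le_sum (f := fun j' => A i j' ^ 2) (fun _ _ => sq_nonneg _)
          (Finset.mem_univ j)
    _ ≤ frobSq A :=
        Finset.single_le_sum (f := fun i' => ∑ j', A i' j' ^ 2)
          (fun _ _ => Finset.sum_nonneg fun _ _ => sq_nonneg _) (Finset.mem_univ i)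

lemma continuous_of_abs_sub_le_mul_eucNorm {G : Vec n → ℝ} {c : ℝ}
    (h : ∀ x y, |G x - G y| ≤ c * eucNorm (x - y)) : Continuous G := by
  refine continuous_iff_continuousAt.mpr fun x => tendsto_iff_dist_tendsto_zero.mpr ?_
  have hcont : Continuous fun y => c * eucNorm (y - x) :=
    continuous_const.mul (continuous_eucNorm.comp (continuous_sub_right x))
  have hlim : Tendsto (fun y => c * eucNorm (y - x)) (𝓝 x) (𝓝 0) := by
    simpa [eucNorm_zero] using hcont.tendsto x
  exact squeeze_zero (fun _ => dist_nonneg) (fun y => h y x) hlim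

lemma dotp_eq_dotProduct (u v : Vec n) : dotp u v = u ⬝ᵥ v := rfl

lemma quadForm_eq_dotProduct_mulVec (X : Matrix (Fin n) (Fin n) ℝ) (v : Vec n) :
    quadForm X v = v ⬝ᵥ X *ᵥ v := by
  simp only [quadForm, dotProduct, mulVec, Finset.mul_sum]
  exact Finset.sum_congr rfl fun i _ => Finset.sum_congr rfl fun j _ => by ring

end Euclidean

section TestQuadratic

variable {n : ℕ} {x q y : Vec n} {c : ℝ} {X : Matrix (Fin n) (Fin n) ℝ} {u : Vec n → ℝ}

def testQuadratic (x : Vec n) (c : ℝ) (q : Vec n) (X : Matrix (Fin n) (Fin n) ℝ) (z : Vec n) :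
    ℝ :=
  c + dotp q (z - x) + (1/2) * quadForm X (z - x)

lemma testQuadratic_self : testQuadratic x c q X x = c := by
  simp [testQuadratic, dotp, quadForm]

lemma continuous_testQuadratic : Continuous (testQuadratic x c q X) := by
  unfold testQuadratic dotp quadForm; fun_prop

lemma testQuadratic_add_smul_one (a : ℝ) (z : Vec n) :
    testQuadratic x c q (X + a • 1) z = testQuadratic x c q X z + a / 2 * eucNorm (z - x) ^ 2 := by
  simp only [testQuadratic, quadForm_eq_dotProduct_mulVec, add_mulVec, smul_mulVec, one_mulVec,
    dotProduct_add, dotProduct_smul, smul_eq_mul, eucNorm_sq]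
  simp only [dotProduct, sq]
  ring

lemma testQuadratic_recenter (hX : X.IsSymm) (y z : Vec n) :
    testQuadratic x c q X z =
      testQuadratic y (testQuadratic x c q X y) (q + X *ᵥ (y - x)) X z := by
  have hsymm : X *ᵥ (y - x) ⬝ᵥ (z - y) = (y - x) ⬝ᵥ X *ᵥ (z - y) := by
    rw [dotProduct_comm, dotProduct_mulVec, ← mulVec_transpose, hX.eq, dotProduct_comm]
  have hsymm' : (z - y) ⬝ᵥ X *ᵥ (y - x) = (y - x) ⬝ᵥ X *ᵥ (z - y) := by
    rw [← hsymm, dotProduct_comm]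
  have hzx : z - x = (y - x) + (z - y) := by abel
  simp only [testQuadratic, dotp_eq_dotProduct, quadForm_eq_dotProduct_mulVec]
  rw [hzx]
  simp only [mulVec_add, dotProduct_add, add_dotProduct, hsymm, hsymm']
  ring

lemma InSuperjet.le_testQuadratic (h : InSuperjet u x q X) {ε : ℝ} (hε : 0 < ε) :
    ∀ᶠ z in 𝓝 x, u z ≤ testQuadratic x (u x) q (X + (4 * ε) • 1) z - ε * eucNorm (z - x) ^ 2 :=
  (h.2 ε hε).mono fun z hz => by
    rw [testQuadratic_add_smul_one]
    simp only [testQuadratic]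
    linarith

lemma inSuperjet_of_isLocalMax (hX : X.IsSymm)
    (h : IsLocalMax (fun z => u z - testQuadratic x c q X z) y) :
    InSuperjet u y (q + X *ᵥ (y - x)) X := by
  refine ⟨hX, fun ε hε => h.mono fun z hz => ?_⟩
  have hquad := testQuadratic_recenter (x := x) (c := c) (q := q) hX y z
  have hself : testQuadratic x c q X y =
      testQuadratic y (testQuadratic x c q X y) (q + X *ᵥ (y - x)) X y := testQuadratic_self.symm
  simp only [testQuadratic] at hquad hself hz
  nlinarith [mul_nonneg hε.le (sq_nonneg (eucNorm (z - y)))]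

end TestQuadratic

section RelaxedLimsup

variable {α : Type*} [TopologicalSpace α] {u : ℕ → α → ℝ} {B : α → ℝ}

def relaxedLimsup (u : ℕ → α → ℝ) (x : α) : ℝ :=
  limsup (fun p : ℕ × α => u p.1 p.2) (atTop ×ˢ 𝓝 x)

lemma eventually_abs_le_of_abs_le (hB : Continuous B) (huB : ∀ n z, |u n z| ≤ B z) (x : α) :
    ∀ᶠ p : ℕ × α in atTop ×ˢ 𝓝 x, |u p.1 p.2| ≤ B x + 1 :=
  ((hB.tendsto x).eventually (gt_mem_nhds (lt_add_one (B x)))).prod_inr atTop |>.mono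
    fun p hp => (huB p.1 p.2).trans hp.le

lemma isBoundedUnder_le_of_abs_le (hB : Continuous B) (huB : ∀ n z, |u n z| ≤ B z) (x : α) :
    IsBoundedUnder (· ≤ ·) (atTop ×ˢ 𝓝 x) fun p : ℕ × α => u p.1 p.2 :=
  isBoundedUnder_of_eventually_le <|
    (eventually_abs_le_of_abs_le hB huB x).mono fun _ hp => (abs_le.mp hp).2

lemma isCoboundedUnder_le_of_abs_le (hB : Continuous B) (huB : ∀ n z, |u n z| ≤ B z) (x : α) :
    IsCoboundedUnder (· ≤ ·) (atTop ×ˢ 𝓝 x) fun p : ℕ × α => u p.1 p.2 :=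
  IsBoundedUnder.isCoboundedUnder_le <| isBoundedUnder_of_eventually_ge <|
    (eventually_abs_le_of_abs_le hB huB x).mono fun _ hp => (abs_le.mp hp).1

lemma le_relaxedLimsup_of_tendsto (hB : Continuous B) (huB : ∀ n z, |u n z| ≤ B z)
    {φ : ℕ → ℕ} {z : ℕ → α} {x : α} {L : ℝ}
    (hφ : Tendsto φ atTop atTop) (hz : Tendsto z atTop (𝓝 x))
    (hL : Tendsto (fun l => u (φ l) (z l)) atTop (𝓝 L)) : L ≤ relaxedLimsup u x := by
  refine le_of_forall_pos_le_add fun η hη => le_of_tendsto hL ?_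
  exact ((hφ.prodMk hz).eventually (eventually_lt_of_limsup_lt (lt_add_of_pos_right _ hη)
    (isBoundedUnder_le_of_abs_le hB huB x))).mono fun _ h => h.le

lemma frequently_lt_of_lt_relaxedLimsup (hB : Continuous B) (huB : ∀ n z, |u n z| ≤ B z)
    {x : α} {c : ℝ} (hc : c < relaxedLimsup u x) :
    ∃ᶠ p : ℕ × α in atTop ×ˢ 𝓝 x, c < u p.1 p.2 :=
  frequently_lt_of_lt_limsup (isCoboundedUnder_le_of_abs_le hB huB x) hc

lemma relaxedLimsup_sub_le_of_isMaxOn (hB : Continuous B) (huB : ∀ n z, |u n z| ≤ B z)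
    {ψ : α → ℝ} {K : Set α} {x : α} {y : ℕ → α} {M : ℝ}
    (hψ : ContinuousAt ψ x) (hK : K ∈ 𝓝 x) (hy : ∀ n, IsMaxOn (fun z => u n z - ψ z) K (y n))
    (hM : Tendsto (fun n => u n (y n) - ψ (y n)) atTop (𝓝 M)) :
    relaxedLimsup u x - ψ x ≤ M := by
  refine le_of_forall_pos_lt_add fun η hη => ?_
  have hfreq := frequently_lt_of_lt_relaxedLimsup hB huB
    (show relaxedLimsup u x - η / 3 < relaxedLimsup u x by linarith)
  have hnear : ∀ᶠ z in 𝓝 x, z ∈ K ∧ ψ z < ψ x + η / 3 :=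
    Filter.Eventually.and hK (hψ.eventually (gt_mem_nhds (by linarith)))
  have hlate : ∀ᶠ n in atTop, u n (y n) - ψ (y n) < M + η / 3 :=
    hM.eventually (gt_mem_nhds (by linarith))
  obtain ⟨⟨n, z⟩, hlt, ⟨hzK, hψz⟩, hMn⟩ :=
    (hfreq.and_eventually ((hnear.prod_inr atTop).and (hlate.prod_inl (𝓝 x)))).exists
  have hmax : u n z - ψ z ≤ u n (y n) - ψ (y n) := hy n hzK
  linarith

theorem exists_isMaxOn_subseq_tendsto_relaxedLimsup [FirstCountableTopology α]
    (hu : ∀ n, Continuous (u n)) (hmono : ∀ n z, u n z ≤ u (n + 1) z)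
    (hB : Continuous B) (huB : ∀ n z, |u n z| ≤ B z)
    {ψ : α → ℝ} {K : Set α} {x : α} (hψ : Continuous ψ) (hK : IsCompact K) (hKx : K ∈ 𝓝 x)
    (hmax : ∀ z ∈ K, z ≠ x → relaxedLimsup u z - ψ z < relaxedLimsup u x - ψ x) :
    ∃ (y : ℕ → α) (φ : ℕ → ℕ), (∀ n, IsMaxOn (fun z => u n z - ψ z) K (y n)) ∧ StrictMono φ ∧
      Tendsto (y ∘ φ) atTop (𝓝 x) ∧
      Tendsto (fun l => u (φ l) (y (φ l))) atTop (𝓝 (relaxedLimsup u x)) := by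
  choose y hyK hy using fun n =>
    hK.exists_isMaxOn ⟨x, mem_of_mem_nhds hKx⟩ ((hu n).sub hψ).continuousOn
  set M : ℕ → ℝ := fun n => u n (y n) - ψ (y n) with hM
  have hMmono : Monotone M := monotone_nat_of_le_succ fun n =>
    (show M n ≤ u (n + 1) (y n) - ψ (y n) by linarith [hmono n (y n)]).trans (hy (n + 1) (hyK n))
  obtain ⟨c, hc⟩ := hK.bddAbove_image (hB.sub hψ).continuousOn
  have hMbdd : BddAbove (Set.range M) := ⟨c, by
    rintro _ ⟨n, rfl⟩
    exact (show M n ≤ B (y n) - ψ (y n) by linarith [(abs_le.mp (huB n (y n))).2]).trans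
      (hc ⟨y n, hyK n, rfl⟩)⟩
  have hMlim := tendsto_atTop_ciSup hMmono hMbdd
  obtain ⟨y₀, hy₀K, φ, hφ, hyφ⟩ := hK.tendsto_subseq hyK
  have hlim : Tendsto (fun l => u (φ l) (y (φ l))) atTop (𝓝 ((⨆ n, M n) + ψ y₀)) :=
    ((hMlim.comp hφ.tendsto_atTop).add ((hψ.tendsto y₀).comp hyφ)).congr fun l => by
      simp [hM]
  have hupper := le_relaxedLimsup_of_tendsto hB huB hφ.tendsto_atTop hyφ hlim
  have hlower := relaxedLimsup_sub_le_of_isMaxOn hB huB hψ.continuousAt hKx hy hMlim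
  obtain rfl : x = y₀ := by
    by_contra hne
    linarith [hmax y₀ hy₀K (Ne.symm hne)]
  have hvalue : (⨆ n, M n) + ψ x = relaxedLimsup u x := by linarith
  exact ⟨y, φ, hy, hφ, hyφ, hvalue ▸ hlim⟩

end RelaxedLimsup

section System

variable {k d m : ℕ} {r : ℝ} {b : Vec k → Vec k} {σ : Vec k → Matrix (Fin k) (Fin d) ℝ}
  {f : Fin m → Vec k → (Fin m → ℝ) → Vec d → ℝ} {g : Fin m → Fin m → Vec k → ℝ} {C : ℝ}

lemma CoreAssumptions.continuous_drift (h : CoreAssumptions b σ f g C) : Continuous b := by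
  obtain ⟨Cb, hCb⟩ := h.1
  refine continuous_pi fun t => continuous_of_abs_sub_le_mul_eucNorm (c := Cb) fun x y => ?_
  simpa using (abs_apply_le_eucNorm (b x - b y) t).trans (hCb x y).1

lemma CoreAssumptions.continuous_diffusion (h : CoreAssumptions b σ f g C) : Continuous σ := by
  obtain ⟨Cb, hCb⟩ := h.1
  refine continuous_matrix fun s t => continuous_of_abs_sub_le_mul_eucNorm (c := Cb) fun x y => ?_
  simpa using (abs_apply_le_sqrt_frobSq (σ x - σ y) s t).trans (hCb x y).2

variable (r b σ f g) in
/-- The operator of `(S_n)` at `x`: `t` is the value of the `i`-th unknown and `w` the values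
entering the obstacle and the off-diagonal arguments of `f i`. The coupled system `(S)` is the
case where `w` holds the values of the same tuple (`switchingOperator_self`). -/
def switchingOperator (i : Fin m) (x : Vec k) (t : ℝ) (w : Fin m → ℝ) (q : Vec k)
    (X : Matrix (Fin k) (Fin k) ℝ) : ℝ :=
  min (t - ⨆ j : {j : Fin m // j ≠ i}, (w j - g i j x))
    (r * t - dotp (b x) q - (1/2) * Matrix.trace (σ x * (σ x)ᵀ * X)
      - f i x (Function.update w i t) ((σ x)ᵀ.mulVec q))

lemma switchingOperator_self (v : Fin m → Vec k → ℝ) (i : Fin m) (x q : Vec k)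
    (X : Matrix (Fin k) (Fin k) ℝ) :
    switchingOperator r b σ f g i x (v i x) (fun j => v j x) q X =
      min (v i x - obstacle g v i x) (ham r b σ f v i x q X) := by
  simp only [switchingOperator, obstacle, ham, Function.update_eq_self]

lemma CoreAssumptions.switchingOperator_anti (h : CoreAssumptions b σ f g C) {i : Fin m}
    {x : Vec k} {t : ℝ} {w w' : Fin m → ℝ} (hw : ∀ j, w j ≤ w' j) (q : Vec k)
    (X : Matrix (Fin k) (Fin k) ℝ) :
    switchingOperator r b σ f g i x t w' q X ≤ switchingOperator r b σ f g i x t w q X := by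
  have hf : f i x (Function.update w i t) ((σ x)ᵀ.mulVec q) ≤
      f i x (Function.update w' i t) ((σ x)ᵀ.mulVec q) := by
    refine monotone_of_monotone_update (F := fun w => f i x (Function.update w i t) _)
      (fun j v s s' hs => ?_) hw
    by_cases hji : j = i
    · subst hji
      simp only [Function.update_idem, le_refl]
    · simp only [Function.update_comm hji]
      exact h.2.2.2.2.2.1 i j hji x _ _ s s' hs
  exact min_le_min (sub_le_sub_left (Finite.ciSup_mono fun j => by linarith [hw j]) t)
    (sub_le_sub_left hf _)

lemma switchingOperator_le_add_smul_one {i : Fin m} {x : Vec k} {t : ℝ} {w : Fin m → ℝ}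
    {q : Vec k} (X : Matrix (Fin k) (Fin k) ℝ) {a : ℝ} (ha : 0 ≤ a) :
    switchingOperator r b σ f g i x t w q X ≤
      switchingOperator r b σ f g i x t w q (X + a • 1) + a / 2 * Matrix.trace (σ x * (σ x)ᵀ) := by
  have htrace : 0 ≤ Matrix.trace (σ x * (σ x)ᵀ) := by
    simpa [conjTranspose_eq_transpose_of_trivial] using
      (posSemidef_self_mul_conjTranspose (σ x)).trace_nonneg
  unfold switchingOperator
  rw [mul_add, Matrix.trace_add, mul_smul_comm, Matrix.trace_smul, mul_one, smul_eq_mul,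
    ← min_add_add_right]
  gcongr
  · linarith [mul_nonneg (div_nonneg ha zero_le_two) htrace]
  · linarith

lemma CoreAssumptions.continuous_switchingOperator (h : CoreAssumptions b σ f g C) (i : Fin m)
    {Q : Vec k → Vec k} (hQ : Continuous Q) (X : Matrix (Fin k) (Fin k) ℝ) :
    Continuous fun p : Vec k × ℝ × (Fin m → ℝ) =>
      switchingOperator r b σ f g i p.1 p.2.1 p.2.2 (Q p.1) X := by
  have hb := h.continuous_drift
  have hσ := h.continuous_diffusion
  have hf := h.2.2.1 i
  have hg := h.2.2.2.2.2.2.2.2.1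
  have hobst : Continuous fun p : Vec k × ℝ × (Fin m → ℝ) =>
      ⨆ j : {j : Fin m // j ≠ i}, (p.2.2 j - g i j p.1) :=
    continuous_ciSup_of_finite fun j => by fun_prop
  have hfval : Continuous fun p : Vec k × ℝ × (Fin m → ℝ) =>
      f i p.1 (Function.update p.2.2 i p.2.1) ((σ p.1)ᵀ.mulVec (Q p.1)) :=
    hf.comp (continuous_fst.prodMk ((continuous_snd.snd.update i continuous_snd.fst).prodMk
      ((hσ.comp continuous_fst).matrix_transpose.matrix_mulVec (hQ.comp continuous_fst))))
  unfold switchingOperator dotp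
  refine (continuous_snd.fst.sub hobst).min (Continuous.sub ?_ hfval)
  have htr : Continuous fun p : Vec k × ℝ × (Fin m → ℝ) => Matrix.trace (σ p.1 * (σ p.1)ᵀ * X) :=
    (((hσ.comp continuous_fst).matrix_mul (hσ.comp continuous_fst).matrix_transpose).matrix_mul
      continuous_const).matrix_trace
  fun_prop

theorem CoreAssumptions.exists_le_relaxedLimsup_switchingOperator_nonpos
    (hcore : CoreAssumptions b σ f g C) {vseq : ℕ → Fin m → Vec k → ℝ} {B : Vec k → ℝ}
    (hcont : ∀ n i, Continuous (vseq n i)) (hmono : ∀ n i x, vseq n i x ≤ vseq (n + 1) i x)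
    (hB : Continuous B) (hbdd : ∀ n i x, |vseq n i x| ≤ B x)
    (hsubn : ∀ n, 1 ≤ n → ∀ i x q X, InSuperjet (vseq n i) x q X →
      switchingOperator r b σ f g i x (vseq n i x) (fun l => vseq (n - 1) l x) q X ≤ 0)
    {i : Fin m} {x q : Vec k} {X : Matrix (Fin k) (Fin k) ℝ} (hX : X.IsSymm) {ε : ℝ}
    (hε : 0 < ε)
    (hW : ∀ᶠ z in 𝓝 x, relaxedLimsup (fun n => vseq n i) z ≤
      testQuadratic x (relaxedLimsup (fun n => vseq n i) x) q X z - ε * eucNorm (z - x) ^ 2) :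
    ∃ β : Fin m → ℝ, (∀ j, β j ≤ relaxedLimsup (fun n => vseq n j) x) ∧
      switchingOperator r b σ f g i x (relaxedLimsup (fun n => vseq n i) x) β q X ≤ 0 := by
  set W := relaxedLimsup fun n => vseq n i
  set ψ := testQuadratic x (W x) q X
  obtain ⟨δ, hδ, hWδ⟩ := Metric.eventually_nhds_iff_ball.mp hW
  have hstrict : ∀ z ∈ Metric.closedBall x (δ / 2), z ≠ x → W z - ψ z < W x - ψ x := by
    intro z hz hzx
    have hWz := hWδ z (Metric.closedBall_subset_ball (by linarith) hz)
    have hdist := eucNorm_pos (sub_ne_zero.mpr hzx)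
    have hψx : ψ x = W x := testQuadratic_self
    linarith [mul_pos hε (pow_pos hdist 2)]
  obtain ⟨y, φ, hy, hφ, hyφ, hvφ⟩ := exists_isMaxOn_subseq_tendsto_relaxedLimsup
    (hcont · i) (hmono · i) hB (hbdd · i) continuous_testQuadratic
    (isCompact_closedBall x (δ / 2)) (Metric.closedBall_mem_nhds x (by positivity)) hstrict
  set w : ℕ → Fin m → ℝ := fun l j => vseq (φ l - 1) j (y (φ l))
  have hwbdd : ∀ᶠ l in atTop, w l ∈ Set.Icc (fun _ => -(B x + 1)) (fun _ => B x + 1) :=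
    (hyφ.eventually ((hB.tendsto x).eventually (gt_mem_nhds (lt_add_one (B x))))).mono
      fun l hl => by
        have hwl := fun j => abs_le.mp ((hbdd (φ l - 1) j (y (φ l))).trans hl.le)
        exact ⟨fun j => (hwl j).1, fun j => (hwl j).2⟩
  obtain ⟨β, -, ρ, hρ, hwρ⟩ :=
    tendsto_subseq_of_frequently_bounded (Metric.isBounded_Icc _ _) hwbdd.frequently
  set N := φ ∘ ρ
  have hN : Tendsto N atTop atTop := (hφ.comp hρ).tendsto_atTop
  have hyN : Tendsto (y ∘ N) atTop (𝓝 x) := hyφ.comp hρ.tendsto_atTop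
  refine ⟨β, fun j => ?_, ?_⟩
  · exact le_relaxedLimsup_of_tendsto hB (hbdd · j) ((tendsto_sub_atTop_nat 1).comp hN) hyN
      (tendsto_pi_nhds.mp hwρ j)
  have hop : ∀ᶠ l in atTop, switchingOperator r b σ f g i (y (N l)) (vseq (N l) i (y (N l)))
      (w (ρ l)) (q + X *ᵥ (y (N l) - x)) X ≤ 0 := by
    filter_upwards [hN.eventually_ge_atTop 1, hyN.eventually (Metric.ball_mem_nhds x (half_pos hδ))]
      with l hl hyl
    refine hsubn (N l) hl i _ _ X (inSuperjet_of_isLocalMax hX ((hy (N l)).isLocalMax ?_))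
    exact mem_of_superset (Metric.isOpen_ball.mem_nhds hyl) Metric.ball_subset_closedBall
  have hlim := ((hcore.continuous_switchingOperator (r := r) i
    (Q := fun z => q + X *ᵥ (z - x)) (by fun_prop) X).tendsto (x, W x, β)).comp
    (hyN.prodMk_nhds ((hvφ.comp hρ.tendsto_atTop).prodMk_nhds hwρ))
  simpa using le_of_tendsto hlim hop

end System

theorem statement10_general {k d m : ℕ}
    (r : ℝ)
    (b : Vec k → Vec k) (σ : Vec k → Matrix (Fin k) (Fin d) ℝ)
    (f : Fin m → Vec k → (Fin m → ℝ) → Vec d → ℝ)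
    (g : Fin m → Fin m → Vec k → ℝ) (C : ℝ)
    (hcore : CoreAssumptions b σ f g C)
    (vseq : ℕ → Fin m → Vec k → ℝ) (Cv : ℝ) (γ : ℕ)
    (hcont : ∀ n i, Continuous (vseq n i))
    (hmono : ∀ n i x, vseq n i x ≤ vseq (n + 1) i x)
    (hbdd : ∀ n i x, |vseq n i x| ≤ Cv * (1 + eucNorm x ^ γ))
    (hsubn : ∀ n : ℕ, 1 ≤ n →
      ∀ (i : Fin m) (x q : Vec k) (X : Matrix (Fin k) (Fin k) ℝ),
        InSuperjet (vseq n i) x q X →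
        min (vseq n i x - ⨆ j : {j : Fin m // j ≠ i}, (vseq (n - 1) j x - g i j x))
          (r * vseq n i x - dotp (b x) q - (1/2) * Matrix.trace (σ x * (σ x)ᵀ * X)
            - f i x (Function.update (fun l => vseq (n - 1) l x) i (vseq n i x))
                ((σ x)ᵀ.mulVec q)) ≤ 0) :
    IsSubsolution r b σ f g
      (fun i x => limsup (fun p : ℕ × Vec k => vseq p.1 i p.2) (atTop ×ˢ nhds x)) := by
  intro i x q X hjet
  set W : Fin m → Vec k → ℝ := fun j => relaxedLimsup fun n => vseq n j
  set T := Matrix.trace (σ x * (σ x)ᵀ)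
  have hB : Continuous fun z : Vec k => Cv * (1 + eucNorm z ^ γ) := by fun_prop
  have hbound : ∀ ε > 0, min (W i x - obstacle g W i x) (ham r b σ f W i x q X) ≤ 2 * ε * T := by
    intro ε hε
    obtain ⟨β, hβ, hop⟩ := hcore.exists_le_relaxedLimsup_switchingOperator_nonpos hcont hmono hB
      hbdd hsubn (hjet.1.add (isSymm_one.smul _)) hε (hjet.le_testQuadratic hε)
    rw [← switchingOperator_self]
    calc _ ≤ switchingOperator r b σ f g i x _ β q X := hcore.switchingOperator_anti hβ q X
      _ ≤ _ := switchingOperator_le_add_smul_one X (by positivity : 0 ≤ 4 * ε)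
      _ ≤ 2 * ε * T := by linarith
  have hlim : Tendsto (fun ε => 2 * ε * T) (𝓝[>] 0) (𝓝 0) := by
    have hscale : Continuous fun ε : ℝ => 2 * ε * T := by fun_prop
    simpa using (hscale.tendsto 0).mono_left nhdsWithin_le_nhds
  show min (W i x - obstacle g W i x) (ham r b σ f W i x q X) ≤ 0
  exact ge_of_tendsto hlim (eventually_nhdsWithin_of_forall hbound)

/-- **Stability of subsolutions via relaxed upper limits.**
If for every `n ≥ 1` the tuple `(v^{1,n},…,v^{m,n})` of continuous functions, increasing
in `n`, uniformly of polynomial growth and pointwise above the frozen obstacle, is a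
viscosity subsolution of the decoupled system `(S_n)`, then the relaxed upper limit
`v^{i,*}(x) = limsup_{n → ∞, x' → x} v^{i,n}(x')` is a viscosity subsolution of the
fully coupled system `(S)`. -/
theorem statement10 {k d m : ℕ} (hk : 1 ≤ k) (hd : 1 ≤ d) (hm : 2 ≤ m)
    (r : ℝ) (hr : 0 < r)
    (b : Vec k → Vec k) (σ : Vec k → Matrix (Fin k) (Fin d) ℝ)
    (f : Fin m → Vec k → (Fin m → ℝ) → Vec d → ℝ)
    (g : Fin m → Fin m → Vec k → ℝ) (C : ℝ) (hC : 0 ≤ C)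
    (hcore : CoreAssumptions b σ f g C)
    (vseq : ℕ → Fin m → Vec k → ℝ) (Cv : ℝ) (γ : ℕ)
    (hcont : ∀ n i, Continuous (vseq n i))
    (hmono : ∀ n i x, vseq n i x ≤ vseq (n + 1) i x)
    (hbdd : ∀ n i x, |vseq n i x| ≤ Cv * (1 + eucNorm x ^ γ))
    (hobst : ∀ n : ℕ, 1 ≤ n → ∀ (i j : Fin m) (x : Vec k), j ≠ i →
      vseq (n - 1) j x - g i j x ≤ vseq n i x)
    (hsubn : ∀ n : ℕ, 1 ≤ n →
      ∀ (i : Fin m) (x q : Vec k) (X : Matrix (Fin k) (Fin k) ℝ),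
        InSuperjet (vseq n i) x q X →
        min (vseq n i x - ⨆ j : {j : Fin m // j ≠ i}, (vseq (n - 1) j x - g i j x))
          (r * vseq n i x - dotp (b x) q - (1/2) * Matrix.trace (σ x * (σ x)ᵀ * X)
            - f i x (Function.update (fun l => vseq (n - 1) l x) i (vseq n i x))
                ((σ x)ᵀ.mulVec q)) ≤ 0) :
    IsSubsolution r b σ f g
      (fun i x => limsup (fun p : ℕ × Vec k => vseq p.1 i p.2) (atTop ×ˢ nhds x)) :=
  statement10_general r b σ f g C hcore vseq Cv γ hcont hmono hbdd hsubn
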